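/- For m ≡ 0 (mod 5), m ≥ 5, the graph G' = K_{m,m} \ E(C_{2m}) has a basis (minimum resolving set) in which every gap contains at most two vertices. -/

import Mathlib

/-- `W` resolves `G`: every vertex is determined by its distance vector to `W`. -/
def Resolves {V : Type*} (G : SimpleGraph V) (W : Set V) : Prop :=
  ∀ u v : V, (∀ w ∈ W, G.dist u w = G.dist v w) → u = v

/-- Metric dimension: minimum cardinality of a (finite) resolving set. -/
noncomputable def metricDim {V : Type*} (G : SimpleGraph V) : ℕ :=
  sInf {k | ∃ W : Set V, W.Finite ∧ W.ncard = k ∧ Resolves G W}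
/-- `K_{m,m}` minus the Hamiltonian cycle `x₁ y₁ x₂ y₂ … x_m y_m x₁` (0-indexed:
cycle edges are `xᵢ yᵢ` and `yᵢ x_{i+1 mod m}`). -/
def cycGraph (m : ℕ) : SimpleGraph (Fin m ⊕ Fin m) where
  Adj u v := match u, v with
    | Sum.inl i, Sum.inr j => j ≠ i ∧ (i : ℕ) ≠ ((j : ℕ) + 1) % m
    | Sum.inr j, Sum.inl i => j ≠ i ∧ (i : ℕ) ≠ ((j : ℕ) + 1) % m
    | _, _ => False
  symm := ⟨by rintro (i|i) (j|j) h <;> exact h⟩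
  loopless := ⟨by rintro (i|i) h <;> exact h⟩

/-- Position `k` (taken mod `2m`) along the Hamiltonian cycle
`x₁ y₁ x₂ y₂ …`: even positions `2i ↦ xᵢ`, odd positions `2i+1 ↦ yᵢ`. -/
def cyc (m : ℕ) [NeZero m] (k : ℕ) : Fin m ⊕ Fin m :=
  if (k % (2 * m)) % 2 = 0 then
    Sum.inl ⟨k % (2 * m) / 2, by
      have hm : 0 < m := Nat.pos_of_ne_zero (NeZero.ne m)
      have h : k % (2 * m) < 2 * m := Nat.mod_lt _ (by omega)
      exact Nat.div_lt_of_lt_mul (by omega)⟩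
  else
    Sum.inr ⟨k % (2 * m) / 2, by
      have hm : 0 < m := Nat.pos_of_ne_zero (NeZero.ne m)
      have h : k % (2 * m) < 2 * m := Nat.mod_lt _ (by omega)
      exact Nat.div_lt_of_lt_mul (by omega)⟩

/-- `W` has a gap of exactly `L` vertices starting at cycle position `s`:
the positions `s` and `s+L+1` are in `W` and the `L` positions strictly between are not. -/
def IsGap (m : ℕ) [NeZero m] (W : Set (Fin m ⊕ Fin m)) (s L : ℕ) : Prop :=
  cyc m s ∈ W ∧ cyc m (s + L + 1) ∈ W ∧ ∀ t, 1 ≤ t → t ≤ L → cyc m (s + t) ∉ W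

/-!
Number the vertices by their position on the Hamiltonian cycle, i.e. by `ZMod (2 * m)`. For
`m ≥ 5` two distinct positions are at distance `2` when they have the same parity, `3` when they
are consecutive on the cycle and `1` otherwise. So two vertices of the same parity outside `W` have
the same distances to `W` iff they have the same cycle-neighbours in `W`.

The positions `≡ 0, 2 (mod 5)` separate all such pairs; there are `4m/5` of them, and no three
consecutive positions avoid them. Conversely, if `W` resolves the graph, every set
`{q, q+1, q+3, q+4}` meets `W` (otherwise `q+1` and `q+3` are not separated), and for each parity at
most one position has neither itself nor a cycle-neighbour in `W`. Counting the points of `W` in all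
`2m` windows `q, …, q+4` gives `4m ≤ 5|W| + 4`.
-/

open SimpleGraph Finset

theorem metricDim_eq_ncard {V : Type*} {G : SimpleGraph V} {W : Set V} (hfin : W.Finite)
    (hW : Resolves G W) (hmin : ∀ W' : Set V, W'.Finite → Resolves G W' → W.ncard ≤ W'.ncard) :
    metricDim G = W.ncard :=
  le_antisymm (Nat.sInf_le ⟨W, hfin, rfl, hW⟩)
    (le_csInf ⟨_, W, hfin, rfl, hW⟩ fun _ ⟨W', hfin', hk, hW'⟩ => hk ▸ hmin W' hfin' hW')

lemma sum_ite_add_mem {G : Type*} [AddGroup G] [Fintype G] [DecidableEq G] (F : Finset G) (c : G) :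
    ∑ q, (if q + c ∈ F then 1 else 0) = #F := by
  rw [Fintype.sum_equiv (Equiv.addRight c) (fun q => if q + c ∈ F then 1 else 0)
    (fun q => if q ∈ F then 1 else 0) (fun _ => rfl), sum_boole]
  simp

lemma ZMod.eq_of_ne_of_ne {a b c : ZMod 2} (hab : a ≠ b) (hac : a ≠ c) : b = c := by
  revert a b c
  decide

namespace CycGraph

def CycAdj {n : ℕ} (p q : ZMod n) : Prop := q = p + 1 ∨ p = q + 1

instance {n : ℕ} : DecidableRel (CycAdj (n := n)) :=
  fun _ _ => inferInstanceAs (Decidable (_ ∨ _))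

lemma CycAdj.symm {n : ℕ} {p q : ZMod n} (h : CycAdj p q) : CycAdj q p := Or.symm h

lemma cycAdj_comm {n : ℕ} {p q : ZMod n} : CycAdj p q ↔ CycAdj q p := ⟨.symm, .symm⟩

lemma cycAdj_iff {n : ℕ} {p q : ZMod n} : CycAdj p q ↔ q = p + 1 ∨ q = p - 1 := by
  rw [CycAdj, eq_sub_iff_add_eq, eq_comm (a := p)]

section Positions

variable {m : ℕ} [NeZero m]

lemma cyc_mod (k : ℕ) : cyc m (k % (2 * m)) = cyc m k := by
  simp only [cyc, Nat.mod_mod]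

lemma cyc_two_mul {i : ℕ} (hi : i < m) : cyc m (2 * i) = Sum.inl ⟨i, hi⟩ := by
  simp [cyc, Nat.mod_eq_of_lt (show 2 * i < 2 * m by omega)]

lemma cyc_two_mul_add_one {i : ℕ} (hi : i < m) : cyc m (2 * i + 1) = Sum.inr ⟨i, hi⟩ := by
  simp [cyc, Nat.mod_eq_of_lt (show 2 * i + 1 < 2 * m by omega), Nat.add_mod]
  omega

variable (m) in
def cycEquiv : ZMod (2 * m) ≃ Fin m ⊕ Fin m where
  toFun p := cyc m p.val
  invFun :=
    Sum.elim (fun i => ((2 * i : ℕ) : ZMod (2 * m))) fun i => ((2 * i + 1 : ℕ) : ZMod (2 * m))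
  left_inv p := by
    have hp := ZMod.val_lt p
    obtain ⟨i, hi | hi⟩ := Nat.even_or_odd' p.val <;> dsimp only
    · rw [hi, cyc_two_mul (by omega), Sum.elim_inl, ← hi, ZMod.natCast_zmod_val]
    · rw [hi, cyc_two_mul_add_one (by omega), Sum.elim_inr, ← hi, ZMod.natCast_zmod_val]
  right_inv v := by
    rcases v with ⟨i, hi⟩ | ⟨i, hi⟩
    · change cyc m ((2 * i : ℕ) : ZMod (2 * m)).val = _
      rw [ZMod.val_natCast, cyc_mod, cyc_two_mul hi]
    · change cyc m ((2 * i + 1 : ℕ) : ZMod (2 * m)).val = _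
      rw [ZMod.val_natCast, cyc_mod, cyc_two_mul_add_one hi]

lemma cyc_eq_cycEquiv (k : ℕ) : cyc m k = cycEquiv m k := by
  simp [cycEquiv, ZMod.val_natCast, cyc_mod]

lemma cycEquiv_symm_inl (i : Fin m) :
    (cycEquiv m).symm (Sum.inl i) = ((2 * i : ℕ) : ZMod (2 * m)) :=
  rfl

lemma cycEquiv_symm_inr (i : Fin m) :
    (cycEquiv m).symm (Sum.inr i) = ((2 * i + 1 : ℕ) : ZMod (2 * m)) :=
  rfl

end Positions

/-- The side of the bipartition: the `xᵢ` sit at even positions, the `yᵢ` at odd ones. -/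
def par (m : ℕ) : ZMod (2 * m) →+* ZMod 2 := ZMod.castHom (dvd_mul_right 2 m) (ZMod 2)

lemma par_two_mul {m : ℕ} (i : ℕ) : par m (2 * i : ℕ) = 0 := by
  rw [map_natCast, ZMod.natCast_eq_zero_iff_even]
  exact even_two_mul i

lemma par_two_mul_add_one {m : ℕ} (i : ℕ) : par m (2 * i + 1 : ℕ) = 1 := by
  rw [Nat.cast_add_one, map_add, par_two_mul, map_one, zero_add]

lemma CycAdj.par_ne {m : ℕ} {p q : ZMod (2 * m)} (h : CycAdj p q) : par m p ≠ par m q := by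
  rcases h with rfl | rfl <;> simp

lemma cycAdj_two_mul_iff {m : ℕ} (i j : Fin m) :
    CycAdj ((2 * i : ℕ) : ZMod (2 * m)) ((2 * j + 1 : ℕ) : ZMod (2 * m)) ↔
      j = i ∨ (i : ℕ) = ((j : ℕ) + 1) % m := by
  have hi := i.isLt
  have hj := j.isLt
  simp only [CycAdj, ← Nat.cast_add_one, ZMod.natCast_eq_natCast_iff', Fin.ext_iff]
  rw [show 2 * (j : ℕ) + 1 + 1 = 2 * ((j : ℕ) + 1) by ring, Nat.mul_mod_mul_left 2 ((j : ℕ) + 1) m,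
    Nat.mod_eq_of_lt (show 2 * (j : ℕ) + 1 < 2 * m by omega),
    Nat.mod_eq_of_lt (show 2 * (i : ℕ) + 1 < 2 * m by omega),
    Nat.mod_eq_of_lt (show 2 * (i : ℕ) < 2 * m by omega)]
  omega

section Adjacency

variable {m : ℕ} [NeZero m]

lemma adj_iff_par_ne_and_not_cycAdj (u v : Fin m ⊕ Fin m) :
    (cycGraph m).Adj u v ↔ par m ((cycEquiv m).symm u) ≠ par m ((cycEquiv m).symm v) ∧
      ¬CycAdj ((cycEquiv m).symm u) ((cycEquiv m).symm v) := by
  rcases u with i | i <;> rcases v with j | j <;>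
    simp only [cycEquiv_symm_inl, cycEquiv_symm_inr, par_two_mul, par_two_mul_add_one]
  · simp only [ne_eq, not_true_eq_false, false_and, iff_false]
    exact id
  · rw [cycAdj_two_mul_iff]
    simp only [ne_eq, zero_ne_one, not_false_eq_true, true_and, not_or]
    rfl
  · rw [cycAdj_comm, cycAdj_two_mul_iff]
    simp only [ne_eq, one_ne_zero, not_false_eq_true, true_and, not_or]
    rfl
  · simp only [ne_eq, not_true_eq_false, false_and, iff_false]
    exact id

lemma adj_cycEquiv_iff {p q : ZMod (2 * m)} :
    (cycGraph m).Adj (cycEquiv m p) (cycEquiv m q) ↔ par m p ≠ par m q ∧ ¬CycAdj p q := by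
  simpa using adj_iff_par_ne_and_not_cycAdj (cycEquiv m p) (cycEquiv m q)

def sideColoring : (cycGraph m).Coloring Bool :=
  Coloring.mk Sum.isLeft (by rintro (i | i) (j | j) h <;> first | exact h.elim | simp)

lemma par_eq_ite_isLeft (p : ZMod (2 * m)) :
    par m p = if (cycEquiv m p).isLeft then 0 else 1 := by
  obtain ⟨i | i, rfl⟩ := (cycEquiv m).symm.surjective p <;> rw [Equiv.apply_symm_apply]
  · simp only [cycEquiv_symm_inl, par_two_mul, Sum.isLeft_inl, if_true]
  · simp only [cycEquiv_symm_inr, par_two_mul_add_one, Sum.isLeft_inr]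
    rfl

lemma even_length_iff_par_eq {p q : ZMod (2 * m)}
    (w : (cycGraph m).Walk (cycEquiv m p) (cycEquiv m q)) :
    Even w.length ↔ par m p = par m q := by
  rw [sideColoring.even_length_iff_congr w, par_eq_ite_isLeft p, par_eq_ite_isLeft q]
  change ((cycEquiv m p).isLeft = true ↔ (cycEquiv m q).isLeft = true) ↔ _
  cases (cycEquiv m p).isLeft <;> cases (cycEquiv m q).isLeft <;> decide

end Adjacency

section Distance

variable {m : ℕ} [NeZero m]

/-- Of the `m` positions of the other parity, at most four are cycle-neighbours of `p` or `q`. -/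
lemma exists_adj_adj_of_par_eq (hm : 5 ≤ m) {p q : ZMod (2 * m)} (h : par m p = par m q) :
    ∃ r, (cycGraph m).Adj (cycEquiv m p) (cycEquiv m r) ∧
      (cycGraph m).Adj (cycEquiv m r) (cycEquiv m q) := by
  let oddShift : Fin m → ZMod (2 * m) := fun i => p + ((2 * i + 1 : ℕ) : ZMod (2 * m))
  have hinj : Function.Injective oddShift := by
    intro i j hij
    have hi := i.isLt
    have hj := j.isLt
    rw [add_right_inj, ZMod.natCast_eq_natCast_iff', Nat.mod_eq_of_lt (by omega),
      Nat.mod_eq_of_lt (by omega)] at hij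
    exact Fin.ext (by omega)
  have hcard : #({p + 1, p - 1, q + 1, q - 1} : Finset (ZMod (2 * m))) <
      #(univ.image oddShift) := by
    rw [card_image_of_injective _ hinj, card_univ, Fintype.card_fin]
    exact card_le_four.trans_lt (by omega)
  obtain ⟨r, hr, hrN⟩ := exists_mem_notMem_of_card_lt_card hcard
  obtain ⟨i, -, rfl⟩ := mem_image.1 hr
  have hpar : par m p ≠ par m (oddShift i) := by
    simp only [oddShift, map_add, par_two_mul_add_one, ne_eq, left_eq_add, one_ne_zero,
      not_false_eq_true]
  simp only [mem_insert, mem_singleton, not_or] at hrN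
  refine ⟨oddShift i, adj_cycEquiv_iff.2 ⟨hpar, ?_⟩, adj_cycEquiv_iff.2 ⟨h ▸ hpar.symm, ?_⟩⟩
  · rw [cycAdj_iff]
    tauto
  · rw [cycAdj_comm, cycAdj_iff]
    tauto

lemma dist_cycEquiv_of_par_eq (hm : 5 ≤ m) {p q : ZMod (2 * m)} (hpq : p ≠ q)
    (h : par m p = par m q) : (cycGraph m).dist (cycEquiv m p) (cycEquiv m q) = 2 := by
  obtain ⟨r, h₁, h₂⟩ := exists_adj_adj_of_par_eq hm h
  let w : (cycGraph m).Walk (cycEquiv m p) (cycEquiv m q) := .cons h₁ (.cons h₂ .nil)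
  have hle : (cycGraph m).dist (cycEquiv m p) (cycEquiv m q) ≤ 2 := dist_le w
  have hne₀ : (cycGraph m).dist (cycEquiv m p) (cycEquiv m q) ≠ 0 := by
    rw [Ne, Reachable.dist_eq_zero_iff ⟨w⟩]
    exact (cycEquiv m).injective.ne hpq
  have hne₁ : (cycGraph m).dist (cycEquiv m p) (cycEquiv m q) ≠ 1 := by
    rw [Ne, dist_eq_one_iff_adj, adj_cycEquiv_iff]
    exact fun hadj => hadj.1 h
  omega

lemma dist_cycEquiv_add_one (hm : 5 ≤ m) (p : ZMod (2 * m)) :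
    (cycGraph m).dist (cycEquiv m p) (cycEquiv m (p + 1)) = 3 := by
  obtain ⟨s, hs, -⟩ := exists_adj_adj_of_par_eq hm (rfl : par m (p + 1) = par m (p + 1))
  have hpar : par m p = par m s :=
    ZMod.eq_of_ne_of_ne (CycAdj.par_ne (Or.inl rfl)).symm (adj_cycEquiv_iff.1 hs).1
  obtain ⟨r, h₁, h₂⟩ := exists_adj_adj_of_par_eq hm hpar
  let w : (cycGraph m).Walk (cycEquiv m p) (cycEquiv m (p + 1)) :=
    .cons h₁ (.cons h₂ (.cons hs.symm .nil))
  obtain ⟨w', hw'⟩ := Reachable.exists_walk_length_eq_dist ⟨w⟩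
  have hodd : ¬Even ((cycGraph m).dist (cycEquiv m p) (cycEquiv m (p + 1))) := by
    rw [← hw', even_length_iff_par_eq]
    exact CycAdj.par_ne (Or.inl rfl)
  have hle : (cycGraph m).dist (cycEquiv m p) (cycEquiv m (p + 1)) ≤ 3 := dist_le w
  have hne₁ : (cycGraph m).dist (cycEquiv m p) (cycEquiv m (p + 1)) ≠ 1 := by
    rw [Ne, dist_eq_one_iff_adj, adj_cycEquiv_iff]
    exact fun hadj => hadj.2 (Or.inl rfl)
  rw [Nat.not_even_iff_odd, Nat.odd_iff] at hodd
  omega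

theorem dist_cycEquiv (hm : 5 ≤ m) {p q : ZMod (2 * m)} (hpq : p ≠ q) :
    (cycGraph m).dist (cycEquiv m p) (cycEquiv m q) =
      if par m p = par m q then 2 else if CycAdj p q then 3 else 1 := by
  split_ifs with hpar hadj
  · exact dist_cycEquiv_of_par_eq hm hpq hpar
  · rcases hadj with rfl | rfl
    · exact dist_cycEquiv_add_one hm p
    · rw [dist_comm]
      exact dist_cycEquiv_add_one hm q
  · exact dist_eq_one_iff_adj.2 (adj_cycEquiv_iff.2 ⟨hpar, hadj⟩)

lemma dist_cycEquiv_ne_zero (hm : 5 ≤ m) {p q : ZMod (2 * m)} (hpq : p ≠ q) :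
    (cycGraph m).dist (cycEquiv m p) (cycEquiv m q) ≠ 0 := by
  rw [dist_cycEquiv hm hpq]
  split_ifs <;> decide

lemma dist_cycEquiv_eq_dist_cycEquiv_iff (hm : 5 ≤ m) {p q r : ZMod (2 * m)}
    (hpar : par m p = par m q) (hp : p ≠ r) (hq : q ≠ r) :
    (cycGraph m).dist (cycEquiv m p) (cycEquiv m r) =
        (cycGraph m).dist (cycEquiv m q) (cycEquiv m r) ↔ (CycAdj p r ↔ CycAdj q r) := by
  rw [dist_cycEquiv hm hp, dist_cycEquiv hm hq, hpar]
  by_cases hr : par m q = par m r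
  · have hp' : ¬CycAdj p r := fun h => h.par_ne (hpar ▸ hr)
    have hq' : ¬CycAdj q r := fun h => h.par_ne hr
    simp only [hr, hp', hq', if_true]
  · by_cases hp' : CycAdj p r <;> by_cases hq' : CycAdj q r <;> simp only [hr, hp', hq'] <;>
      decide

lemma eq_of_resolves_of_cycAdj_iff (hm : 5 ≤ m) {W : Set (Fin m ⊕ Fin m)}
    (hW : Resolves (cycGraph m) W) {p q : ZMod (2 * m)} (hp : cycEquiv m p ∉ W)
    (hq : cycEquiv m q ∉ W) (hpar : par m p = par m q)
    (h : ∀ r, cycEquiv m r ∈ W → (CycAdj p r ↔ CycAdj q r)) : p = q :=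
  (cycEquiv m).injective <| hW _ _ fun w hw => by
    obtain ⟨r, rfl⟩ := (cycEquiv m).surjective w
    refine (dist_cycEquiv_eq_dist_cycEquiv_iff hm hpar ?_ ?_).2 (h r hw) <;> rintro rfl
    exacts [hp hw, hq hw]

end Distance

section Counting

variable {n : ℕ} [NeZero n]

def isolatedFrom (F : Finset (ZMod n)) : Finset (ZMod n) :=
  univ.filter fun u => u - 1 ∉ F ∧ u ∉ F ∧ u + 1 ∉ F

/-- Each window `q, …, q+4` contains two points of `F`, or exactly one, and then `q+1` or `q+3` is
isolated from `F`. -/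
theorem two_mul_le_five_mul_card_add (F : Finset (ZMod n))
    (hF : ∀ q, q ∈ F ∨ q + 1 ∈ F ∨ q + 3 ∈ F ∨ q + 4 ∈ F) :
    2 * n ≤ 5 * #F + 2 * #(isolatedFrom F) := by
  have hwin : ∀ q : ZMod n, 2 ≤ (if q + 0 ∈ F then 1 else 0) + (if q + 1 ∈ F then 1 else 0) +
      (if q + 2 ∈ F then 1 else 0) + (if q + 3 ∈ F then 1 else 0) + (if q + 4 ∈ F then 1 else 0) +
      (if q + 1 ∈ isolatedFrom F then 1 else 0) + (if q + 3 ∈ isolatedFrom F then 1 else 0) := by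
    intro q
    have e₁ : q + 1 + 1 = q + 2 := by ring
    have e₂ : q + 3 - 1 = q + 2 := by ring
    have e₃ : q + 3 + 1 = q + 4 := by ring
    have hq := hF q
    simp only [isolatedFrom, mem_filter, mem_univ, true_and, add_zero, add_sub_cancel_right,
      e₁, e₂, e₃]
    by_cases h₀ : q ∈ F <;> by_cases h₁ : q + 1 ∈ F <;> by_cases h₂ : q + 2 ∈ F <;>
      by_cases h₃ : q + 3 ∈ F <;> by_cases h₄ : q + 4 ∈ F <;> simp_all
  have hsum := sum_le_sum fun q (_ : q ∈ univ) => hwin q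
  simp only [sum_const, card_univ, ZMod.card, smul_eq_mul, sum_add_distrib, sum_ite_add_mem]
    at hsum
  omega

end Counting

section Basis

variable {n : ℕ} [NeZero n]

def mod5 (h : 5 ∣ n) : ZMod n →+* ZMod 5 := ZMod.castHom h (ZMod 5)

def basisPos (h : 5 ∣ n) : Finset (ZMod n) := univ.filter fun p => mod5 h p = 0 ∨ mod5 h p = 2

lemma mem_basisPos {h : 5 ∣ n} {p : ZMod n} : p ∈ basisPos h ↔ mod5 h p = 0 ∨ mod5 h p = 2 := by
  simp only [basisPos, mem_filter, mem_univ, true_and]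

lemma five_mul_card_basisPos (h : 5 ∣ n) : 5 * #(basisPos h) = 2 * n := by
  have hwin : ∀ q : ZMod n, (if q + 0 ∈ basisPos h then 1 else 0) +
      (if q + 1 ∈ basisPos h then 1 else 0) + (if q + 2 ∈ basisPos h then 1 else 0) +
      (if q + 3 ∈ basisPos h then 1 else 0) + (if q + 4 ∈ basisPos h then 1 else 0) = 2 := by
    intro q
    simp only [mem_basisPos, map_add, map_zero, map_one, map_ofNat]
    generalize mod5 h q = x
    revert x
    decide
  have hsum := sum_congr rfl fun q (_ : q ∈ univ) => hwin q
  simp only [sum_add_distrib, sum_ite_add_mem, sum_const, card_univ, ZMod.card, smul_eq_mul]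
    at hsum
  omega

/-- A position of residue `1` has both cycle-neighbours in `basisPos h`, one of residue `3` or `4`
has exactly one, and only a position of residue `1` shares that neighbour with it. -/
lemma exists_mem_basisPos_not_cycAdj_iff (h : 5 ∣ n) {p q : ZMod n} (hpq : p ≠ q)
    (hp : p ∉ basisPos h) : ∃ r ∈ basisPos h, ¬(CycAdj p r ↔ CycAdj q r) := by
  have key : ∀ a b, a ≠ b → mod5 h a = 1 → ∃ r ∈ basisPos h, CycAdj a r ∧ ¬CycAdj b r := by
    intro a b hab ha
    by_cases hb : CycAdj b (a - 1)
    · refine ⟨a + 1, mem_basisPos.2 (by simp only [map_add, map_one, ha]; decide), Or.inl rfl, ?_⟩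
      rw [cycAdj_iff] at hb ⊢
      rcases hb with hb | hb
      · rintro (hb' | hb')
        · exact hab (add_right_cancel hb')
        · have h₁ := congrArg (mod5 h) hb
          have h₂ := congrArg (mod5 h) hb'
          simp only [map_add, map_sub, map_one, ha] at h₁ h₂
          exact (by decide : ∀ y : ZMod 5, 1 - 1 = y + 1 → 1 + 1 ≠ y - 1) _ h₁ h₂
      · exact absurd (sub_left_inj.1 hb) hab
    · exact ⟨a - 1, mem_basisPos.2 (by simp only [map_sub, map_one, ha]; decide),
        Or.inr (sub_add_cancel a 1).symm, hb⟩
  by_cases hq₁ : mod5 h q = 1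
  · obtain ⟨r, hr, h₁, h₂⟩ := key q p hpq.symm hq₁
    exact ⟨r, hr, fun hiff => h₂ (hiff.2 h₁)⟩
  rw [mem_basisPos] at hp
  rcases (by decide : ∀ x : ZMod 5, ¬(x = 0 ∨ x = 2) → x = 1 ∨ x = 3 ∨ x = 4) _ hp
    with hp₁ | hp₃ | hp₄
  · obtain ⟨r, hr, h₁, h₂⟩ := key p q hpq hp₁
    exact ⟨r, hr, fun hiff => h₂ (hiff.1 h₁)⟩
  · refine ⟨p - 1, mem_basisPos.2 (by simp only [map_sub, map_one, hp₃]; decide), fun hiff => ?_⟩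
    rcases cycAdj_iff.1 (hiff.1 (Or.inr (sub_add_cancel p 1).symm)) with h' | h'
    · have := congrArg (mod5 h) h'
      simp only [map_add, map_sub, map_one, hp₃] at this
      exact hq₁ ((by decide : ∀ y : ZMod 5, 3 - 1 = y + 1 → y = 1) _ this)
    · exact hpq (sub_left_inj.1 h')
  · refine ⟨p + 1, mem_basisPos.2 (by simp only [map_add, map_one, hp₄]; decide), fun hiff => ?_⟩
    rcases cycAdj_iff.1 (hiff.1 (Or.inl rfl)) with h' | h'
    · exact hpq (add_right_cancel h')
    · have := congrArg (mod5 h) h'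
      simp only [map_add, map_sub, map_one, hp₄] at this
      exact hq₁ ((by decide : ∀ y : ZMod 5, 4 + 1 = y - 1 → y = 1) _ this)

end Basis

section Resolving

variable {m : ℕ} [NeZero m]

def basis (h : 5 ∣ 2 * m) : Set (Fin m ⊕ Fin m) := cycEquiv m '' basisPos h

lemma card_basis (h : 5 ∣ 2 * m) : 5 * (basis h).ncard = 4 * m := by
  rw [basis, Set.ncard_image_of_injective _ (cycEquiv m).injective, Set.ncard_coe_finset,
    five_mul_card_basisPos]
  ring

theorem resolves_basis (hm : 5 ≤ m) (h : 5 ∣ 2 * m) : Resolves (cycGraph m) (basis h) := by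
  intro u v huv
  obtain ⟨p, rfl⟩ := (cycEquiv m).surjective u
  obtain ⟨q, rfl⟩ := (cycEquiv m).surjective v
  rw [(cycEquiv m).apply_eq_iff_eq]
  by_contra hpq
  have hdist : ∀ r ∈ basisPos h, (cycGraph m).dist (cycEquiv m p) (cycEquiv m r) =
      (cycGraph m).dist (cycEquiv m q) (cycEquiv m r) :=
    fun r hr => huv _ ((cycEquiv m).injective.mem_set_image.2 hr)
  have hp : p ∉ basisPos h := fun hp =>
    dist_cycEquiv_ne_zero hm (Ne.symm hpq) ((hdist p hp).symm.trans SimpleGraph.dist_self)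
  have hq : q ∉ basisPos h := fun hq =>
    dist_cycEquiv_ne_zero hm hpq ((hdist q hq).trans SimpleGraph.dist_self)
  by_cases hpar : par m p = par m q
  · obtain ⟨r, hr, hiff⟩ := exists_mem_basisPos_not_cycAdj_iff h hpq hp
    refine hiff ((dist_cycEquiv_eq_dist_cycEquiv_iff hm hpar ?_ ?_).1 (hdist r hr)) <;>
      rintro rfl
    exacts [hp hr, hq hr]
  · have h₀ : (0 : ZMod (2 * m)) ∈ basisPos h := mem_basisPos.2 (Or.inl (map_zero _))
    have hd := hdist 0 h₀
    rw [dist_cycEquiv hm (by rintro rfl; exact hp h₀),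
      dist_cycEquiv hm (by rintro rfl; exact hq h₀)] at hd
    by_cases hp₀ : par m p = par m 0
    · have hq₀ : par m q ≠ par m 0 := fun hq₀ => hpar (hp₀.trans hq₀.symm)
      simp only [hp₀, hq₀, if_true, if_false] at hd
      split_ifs at hd <;> omega
    · have hq₀ : par m q = par m 0 := ZMod.eq_of_ne_of_ne hpar hp₀
      simp only [hp₀, hq₀, if_true, if_false] at hd
      split_ifs at hd <;> omega

noncomputable def positions (W : Set (Fin m ⊕ Fin m)) : Finset (ZMod (2 * m)) :=
  (Set.toFinite (cycEquiv m ⁻¹' W)).toFinset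

lemma mem_positions {W : Set (Fin m ⊕ Fin m)} {p : ZMod (2 * m)} :
    p ∈ positions W ↔ cycEquiv m p ∈ W :=
  Set.Finite.mem_toFinset _

lemma card_positions (W : Set (Fin m ⊕ Fin m)) : #(positions W) = W.ncard := by
  rw [positions, ← Set.ncard_eq_toFinset_card,
    Set.ncard_preimage_of_injective_subset_range (cycEquiv m).injective (by simp)]

lemma mem_positions_or_of_resolves (hm : 5 ≤ m) {W : Set (Fin m ⊕ Fin m)}
    (hW : Resolves (cycGraph m) W) (q : ZMod (2 * m)) :
    q ∈ positions W ∨ q + 1 ∈ positions W ∨ q + 3 ∈ positions W ∨ q + 4 ∈ positions W := by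
  by_contra! hq
  simp only [mem_positions] at hq
  obtain ⟨h₀, h₁, h₃, h₄⟩ := hq
  have hpar : par m (q + 1) = par m (q + 3) := by
    simp only [map_add, map_one, map_ofNat]
    congr 1
  have h13 := eq_of_resolves_of_cycAdj_iff hm hW h₁ h₃ hpar fun r hr => by
    have hr₀ : r ≠ q := by rintro rfl; exact h₀ hr
    have hr₄ : r ≠ q + 4 := by rintro rfl; exact h₄ hr
    have e₁ : q + 1 + 1 = q + 2 := by ring
    have e₂ : q + 3 - 1 = q + 2 := by ring
    have e₃ : q + 3 + 1 = q + 4 := by ring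
    simp only [cycAdj_iff, e₁, e₂, e₃, add_sub_cancel_right, hr₀, hr₄, or_false, false_or]
  have h₂ : ((2 : ℕ) : ZMod (2 * m)) = 0 := by
    push_cast
    linear_combination h13.symm
  rw [ZMod.natCast_eq_zero_iff] at h₂
  exact absurd (Nat.le_of_dvd two_pos h₂) (by omega)

lemma card_isolatedFrom_positions_le_two (hm : 5 ≤ m) {W : Set (Fin m ⊕ Fin m)}
    (hW : Resolves (cycGraph m) W) : #(isolatedFrom (positions W)) ≤ 2 := by
  have hnot : ∀ u ∈ isolatedFrom (positions W), ∀ r, cycEquiv m r ∈ W → ¬CycAdj u r := by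
    intro u hu r hr
    simp only [isolatedFrom, mem_filter, mem_univ, true_and, mem_positions] at hu
    rw [cycAdj_iff]
    rintro (rfl | rfl)
    exacts [hu.2.2 hr, hu.1 hr]
  calc #(isolatedFrom (positions W)) ≤ #(univ : Finset (ZMod 2)) := by
        refine card_le_card_of_injOn (par m) (fun _ _ => mem_coe.2 (mem_univ _)) ?_
        intro u hu v hv huv
        have hu' := mem_positions.not.1 (mem_filter.1 hu).2.2.1
        have hv' := mem_positions.not.1 (mem_filter.1 hv).2.2.1
        exact eq_of_resolves_of_cycAdj_iff hm hW hu' hv' huv fun r hr =>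
          iff_of_false (hnot u hu r hr) (hnot v hv r hr)
    _ = 2 := rfl

theorem four_mul_le_five_mul_ncard_add_four (hm : 5 ≤ m) {W : Set (Fin m ⊕ Fin m)}
    (hW : Resolves (cycGraph m) W) : 4 * m ≤ 5 * W.ncard + 4 := by
  have := two_mul_le_five_mul_card_add (positions W) (mem_positions_or_of_resolves hm hW)
  have := card_isolatedFrom_positions_le_two hm hW
  rw [card_positions] at *
  omega

lemma le_two_of_isGap_basis (h : 5 ∣ 2 * m) {s L : ℕ} (hgap : IsGap m (basis h) s L) : L ≤ 2 := by
  by_contra! hL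
  have hmem : ∀ k : ℕ, cyc m k ∈ basis h ↔ (k : ZMod 5) = 0 ∨ (k : ZMod 5) = 2 := by
    intro k
    rw [cyc_eq_cycEquiv, basis, (cycEquiv m).injective.mem_set_image, mem_coe, mem_basisPos,
      map_natCast]
  have h₁ := hgap.2.2 1 le_rfl (by omega)
  have h₂ := hgap.2.2 2 (by omega) (by omega)
  have h₃ := hgap.2.2 3 (by omega) (by omega)
  rw [hmem] at h₁ h₂ h₃
  push_cast at h₁ h₂ h₃
  revert h₁ h₂ h₃
  generalize (s : ZMod 5) = x
  revert x
  decide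

end Resolving

end CycGraph

/-- for `m ≡ 0 (mod 5)`, `m ≥ 5`, the graph `K_{m,m} \ E(C_{2m})`
has a basis all of whose gaps contain at most two vertices. -/
theorem stmt18 (m : ℕ) [NeZero m] (hm : 5 ≤ m) (hmod : m % 5 = 0) :
    ∃ W : Set (Fin m ⊕ Fin m), W.Finite ∧ Resolves (cycGraph m) W ∧
      W.ncard = metricDim (cycGraph m) ∧ ∀ s L, IsGap m W s L → L ≤ 2 := by
  have h5 : 5 ∣ 2 * m := Dvd.dvd.mul_left (Nat.dvd_of_mod_eq_zero hmod) 2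
  have hres := CycGraph.resolves_basis hm h5
  have hcard := CycGraph.card_basis h5
  have hdim := metricDim_eq_ncard (Set.toFinite _) hres fun W _ hW => by
    have := CycGraph.four_mul_le_five_mul_ncard_add_four hm hW
    omega
  exact ⟨CycGraph.basis h5, Set.toFinite _, hres, hdim.symm,
    fun _ _ => CycGraph.le_two_of_isGap_basis h5⟩
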